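/- If X is a traceless self-adjoint operator on a multipartite Hilbert space ⊗_{i∈I} H_i such that Tr_J[X] = 0 for some subset J ⊆ I (partial trace over J vanishes), then its Wasserstein-1 norm satisfies ‖X‖_{W₁} ≤ |J| · ‖X‖₁. -/

import Mathlib

open scoped BigOperators Matrix Classical ComplexOrder

noncomputable section

namespace Paper

variable {n : Type*} [Fintype n] [DecidableEq n]

/-- Operator (spectral) norm of a matrix, via the Euclidean operator norm. -/
def opNorm (A : Matrix n n ℂ) : ℝ :=
  ‖LinearMap.toContinuousLinearMap (Matrix.toEuclideanLin A)‖

/-- Functional calculus on Hermitian matrices (returns `0` on non-Hermitian input). -/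
def matFun (f : ℝ → ℝ) (A : Matrix n n ℂ) : Matrix n n ℂ :=
  if h : A.IsHermitian then
    (h.eigenvectorUnitary : Matrix n n ℂ) *
      Matrix.diagonal (fun i => (f (h.eigenvalues i) : ℂ)) *
      (star h.eigenvectorUnitary : Matrix n n ℂ)
  else 0

/-- Matrix logarithm (spectral). -/
def matLog (A : Matrix n n ℂ) : Matrix n n ℂ := matFun Real.log A

/-- Matrix exponential (spectral, for Hermitian matrices). -/
def matExp (A : Matrix n n ℂ) : Matrix n n ℂ := matFun Real.exp A

/-- Trace norm (of a Hermitian matrix: the sum of absolute values of eigenvalues). -/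
def traceNorm (A : Matrix n n ℂ) : ℝ :=
  if h : A.IsHermitian then ∑ i, |h.eigenvalues i| else 0

/-- Umegaki relative entropy `D(ρ‖σ) = Tr[ρ(log ρ − log σ)]`. -/
def relEnt (ρ σ : Matrix n n ℂ) : ℝ :=
  (Matrix.trace (ρ * (matLog ρ - matLog σ))).re

/-- von Neumann entropy. -/
def vnEnt (ρ : Matrix n n ℂ) : ℝ := -(Matrix.trace (ρ * matLog ρ)).re

/-- A quantum state: positive semidefinite with unit trace. -/
def IsState (ρ : Matrix n n ℂ) : Prop := ρ.PosSemidef ∧ ρ.trace = 1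

/-- Entropy production of a generator `L` with respect to the reference state `σ`. -/
def entProd (L : Matrix n n ℂ → Matrix n n ℂ) (σ ρ : Matrix n n ℂ) : ℝ :=
  -(Matrix.trace (L ρ * (matLog ρ - matLog σ))).re

end Paper
namespace Paper

variable {ι : Type*} [Fintype ι] [DecidableEq ι] {d : ι → Type*}
  [∀ i, Fintype (d i)] [∀ i, DecidableEq (d i)]

/-- Embedding `Id_i ⊗ H̃` of an operator `H̃` on the complement of the site `i` into the full
multipartite space. -/
def embedAt (i : ι) (M : Matrix (∀ j : {j : ι // j ≠ i}, d j.1) (∀ j : {j : ι // j ≠ i}, d j.1) ℂ) :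
    Matrix (∀ j, d j) (∀ j, d j) ℂ :=
  fun x y => if x i = y i then M (fun j => x j.1) (fun j => y j.1) else 0

/-- The Lipschitz norm `‖H‖_L = 2 maxᵢ min_{H̃} ‖H − Id_i ⊗ H̃‖_∞` on a multipartite space. -/
def lipNorm (H : Matrix (∀ j, d j) (∀ j, d j) ℂ) : ℝ :=
  2 * ⨆ i : ι, ⨅ M : Matrix (∀ j : {j : ι // j ≠ i}, d j.1) (∀ j : {j : ι // j ≠ i}, d j.1) ℂ,
    opNorm (H - embedAt i M)

/-- The quantum Wasserstein norm of order 1: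
`‖X‖_{W₁} = max{Tr[H X] : H self-adjoint, ‖H‖_L ≤ 1}`. -/
def w1Norm (X : Matrix (∀ j, d j) (∀ j, d j) ℂ) : ℝ :=
  sSup {r : ℝ | ∃ H : Matrix (∀ j, d j) (∀ j, d j) ℂ,
    H.IsHermitian ∧ lipNorm H ≤ 1 ∧ r = (Matrix.trace (H * X)).re}

/-- Partial trace over the sites in `J`, giving an operator on the complementary sites. -/
def ptraceSet (J : Finset ι) (X : Matrix (∀ j, d j) (∀ j, d j) ℂ) :
    Matrix (∀ j : {j : ι // j ∉ J}, d j.1) (∀ j : {j : ι // j ∉ J}, d j.1) ℂ :=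
  fun x y => ∑ z : ∀ j : {j : ι // j ∈ J}, d j.1,
    X (fun j => if h : j ∈ J then z ⟨j, h⟩ else x ⟨j, h⟩)
      (fun j => if h : j ∈ J then z ⟨j, h⟩ else y ⟨j, h⟩)

end Paper
namespace Paper


/-!
Let `E_S A = (Id_S / d_S) ⊗ Tr_S A` be the conditional expectation onto the operators acting
trivially on the sites in `S`. It is a contraction for the operator norm (up to a reindexing it is
`A ↦ d_S⁻¹ • (1 ⊗ Tr_S A)`, and `‖Tr_S A‖ ≤ d_S ‖A‖`), it fixes every `Id_i ⊗ H̃` when `S = {i}`,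
and `E_S ∘ E_T = E_{S ∪ T}` for disjoint `S`, `T`. Hence `‖H - E_i H‖ ≤ 2 ‖H - Id_i ⊗ H̃‖` for
every `H̃`, and telescoping along the sites of `J` gives `‖H - E_J H‖ ≤ |J| ‖H‖_L`. Finally
`Tr_J X = 0` makes `Tr[E_J(H) X]` vanish, so by Hölder's inequality
`Tr[H X] = Tr[(H - E_J H) X] ≤ ‖H - E_J H‖_∞ ‖X‖₁ ≤ |J| ‖H‖_L ‖X‖₁`.
-/

open scoped Matrix.Norms.L2Operator Kronecker

section OperatorNorm

variable {n : Type*} [Fintype n] [DecidableEq n]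

lemma opNorm_eq_norm (A : Matrix n n ℂ) : opNorm A = ‖A‖ := rfl

lemma norm_one_le : ‖(1 : Matrix n n ℂ)‖ ≤ 1 := by
  rw [← Matrix.diagonal_one, Matrix.l2_opNorm_diagonal]
  exact pi_norm_le_iff_of_nonneg zero_le_one |>.2 fun _ => by simp

lemma norm_submatrix_le {m : Type*} [Fintype m] [DecidableEq m] (A : Matrix n n ℂ)
    {f : m → n} (hf : Function.Injective f) : ‖A.submatrix f f‖ ≤ ‖A‖ := by
  set P : Matrix n m ℂ := (1 : Matrix n n ℂ).submatrix id f
  have hP : ‖P‖ ≤ 1 := by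
    have hPP : Pᴴ * P = 1 := by
      rw [Matrix.conjTranspose_submatrix, Matrix.conjTranspose_one,
        ← Matrix.submatrix_mul _ _ _ _ _ Function.bijective_id, Matrix.one_mul,
        Matrix.submatrix_one _ hf]
    have h := Matrix.l2_opNorm_conjTranspose_mul_self P
    rw [hPP] at h
    nlinarith [norm_one_le (n := m), norm_nonneg P]
  have hA : A.submatrix f f = Pᴴ * A * P := by
    ext i j
    simp [P, Matrix.mul_apply, Matrix.one_apply]
  calc ‖A.submatrix f f‖ = ‖Pᴴ * A * P‖ := by rw [hA]
    _ ≤ ‖Pᴴ‖ * ‖A‖ * ‖P‖ :=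
      (Matrix.l2_opNorm_mul _ _).trans (by gcongr; exact Matrix.l2_opNorm_mul _ _)
    _ = ‖P‖ * ‖P‖ * ‖A‖ := by rw [Matrix.l2_opNorm_conjTranspose]; ring
    _ ≤ ‖A‖ := mul_le_of_le_one_left (norm_nonneg A) (mul_le_one₀ hP (norm_nonneg P) hP)

lemma norm_reindex {m : Type*} [Fintype m] [DecidableEq m] (e : m ≃ n) (A : Matrix m m ℂ) :
    ‖Matrix.reindex e e A‖ = ‖A‖ :=
  le_antisymm (norm_submatrix_le A e.symm.injective) <| by
    simpa using norm_submatrix_le (Matrix.reindex e e A) e.injective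

lemma norm_apply_self_le (A : Matrix n n ℂ) (i : n) : ‖A i i‖ ≤ ‖A‖ := by
  have h := norm_submatrix_le A (f := fun _ : Unit => i) (fun _ _ _ => rfl)
  have hdiag : A.submatrix (fun _ : Unit => i) (fun _ => i) = Matrix.diagonal fun _ => A i i := by
    ext; simp
  rwa [hdiag, Matrix.l2_opNorm_diagonal, pi_norm_const] at h

lemma traceNorm_nonneg (A : Matrix n n ℂ) : 0 ≤ traceNorm A := by
  unfold traceNorm
  split_ifs
  exacts [Finset.sum_nonneg fun i _ => abs_nonneg _, le_rfl]

lemma abs_re_trace_mul_le (A X : Matrix n n ℂ) (hX : X.IsHermitian) :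
    |(A * X).trace.re| ≤ ‖A‖ * traceNorm X := by
  set U := hX.eigenvectorUnitary
  have htrace :
      (A * X).trace = ∑ i, (star (U : Matrix n n ℂ) * A * U) i i * hX.eigenvalues i := by
    conv_lhs => rw [hX.spectral_theorem, Unitary.conjStarAlgAut_apply]
    rw [← Matrix.mul_assoc, ← Matrix.mul_assoc, Matrix.trace_mul_cycle, ← Matrix.mul_assoc]
    simp [Matrix.trace, Matrix.mul_diagonal, U]
  have hU : ‖star (U : Matrix n n ℂ) * A * U‖ = ‖A‖ := by
    rw [CStarRing.norm_mul_coe_unitary, ← Unitary.coe_star, CStarRing.norm_coe_unitary_mul]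
  rw [traceNorm, dif_pos hX, Finset.mul_sum, htrace]
  refine (Complex.abs_re_le_norm _).trans <| (norm_sum_le _ _).trans <|
    Finset.sum_le_sum fun i _ => ?_
  rw [norm_mul, Complex.norm_real, Real.norm_eq_abs, ← hU]
  gcongr
  exact norm_apply_self_le _ i

end OperatorNorm

lemma trace_reindex {m n R : Type*} [Fintype m] [Fintype n] [AddCommMonoid R] (e : m ≃ n)
    (A : Matrix m m R) : (Matrix.reindex e e A).trace = A.trace :=
  e.symm.sum_comp fun i => A i i

lemma natCast_card_ne_zero {α : Type*} [Fintype α] (x : α) : (Fintype.card α : ℂ) ≠ 0 :=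
  have : Nonempty α := ⟨x⟩
  Nat.cast_ne_zero.2 Fintype.card_ne_zero

section Bipartite

variable {α β : Type*} [Fintype α] [DecidableEq α] [Fintype β]

def partialTraceFst {R : Type*} [AddCommMonoid R] (A : Matrix (α × β) (α × β) R) :
    Matrix β β R :=
  fun b b' => ∑ a, A (a, b) (a, b')

variable (α) in
def oneKroneckerStarAlgHom [DecidableEq β] :
    Matrix β β ℂ →⋆ₐ[ℂ] Matrix (α × β) (α × β) ℂ where
  toFun B := 1 ⊗ₖ B
  map_one' := Matrix.one_kronecker_one
  map_mul' B C := by rw [← Matrix.mul_kronecker_mul, Matrix.one_mul]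
  map_zero' := Matrix.kronecker_zero _
  map_add' := Matrix.kronecker_add _
  commutes' c := by
    simp only [Algebra.algebraMap_eq_smul_one, Matrix.kronecker_smul, Matrix.one_kronecker_one]
  map_star' B := by simp [Matrix.star_eq_conjTranspose, Matrix.conjTranspose_kronecker]

lemma norm_one_kronecker_le [DecidableEq β] (B : Matrix β β ℂ) :
    ‖(1 : Matrix α α ℂ) ⊗ₖ B‖ ≤ ‖B‖ :=
  NonUnitalStarAlgHom.norm_apply_le (oneKroneckerStarAlgHom α) B

lemma norm_partialTraceFst_le [DecidableEq β] (A : Matrix (α × β) (α × β) ℂ) :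
    ‖partialTraceFst A‖ ≤ Fintype.card α * ‖A‖ := by
  have h : partialTraceFst A = ∑ a, A.submatrix (Prod.mk a) (Prod.mk a) := by
    ext b b'
    simp [partialTraceFst, Matrix.sum_apply]
  calc ‖partialTraceFst A‖ ≤ ∑ a, ‖A.submatrix (Prod.mk a) (Prod.mk a)‖ :=
        h ▸ norm_sum_le _ _
    _ ≤ ∑ _a : α, ‖A‖ :=
      Finset.sum_le_sum fun a _ => norm_submatrix_le A (Prod.mk_right_injective a)
    _ = Fintype.card α * ‖A‖ := by simp

lemma trace_one_kronecker_mul {R : Type*} [CommSemiring R] (B : Matrix β β R)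
    (Y : Matrix (α × β) (α × β) R) :
    ((1 ⊗ₖ B) * Y).trace = (B * partialTraceFst Y).trace := by
  simp only [Matrix.trace, Matrix.diag, Matrix.mul_apply, partialTraceFst,
    Matrix.kroneckerMap_apply, Matrix.one_apply, Fintype.sum_prod_type, ite_mul, one_mul,
    zero_mul, Finset.mul_sum]
  rw [Finset.sum_comm]
  refine Finset.sum_congr rfl fun b _ => ?_
  rw [Finset.sum_comm]
  simp [Finset.sum_comm (γ := α)]

end Bipartite

section Multipartite

variable {ι : Type*} [DecidableEq ι] {d : ι → Type*} [∀ i, Fintype (d i)]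

lemma partialTraceFst_reindex (J : Finset ι) (X : Matrix (∀ j, d j) (∀ j, d j) ℂ) :
    partialTraceFst (Matrix.reindex (Equiv.piEquivPiSubtypeProd (· ∈ J) d)
      (Equiv.piEquivPiSubtypeProd (· ∈ J) d) X) = ptraceSet J X := rfl

variable [Fintype ι]

lemma sum_sum_piecewise (S : Finset ι) (f : (∀ j, d j) → ℂ) :
    ∑ z : ∀ j, d j, ∑ w : ∀ j, d j, f (S.piecewise w z)
      = Fintype.card (∀ j, d j) * ∑ u, f u := by
  have swap : Function.Involutive
      fun p : (∀ j, d j) × (∀ j, d j) => (S.piecewise p.2 p.1, S.piecewise p.1 p.2) := by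
    rintro ⟨z, w⟩
    ext j <;> by_cases hj : j ∈ S <;> simp [hj]
  rw [← Fintype.sum_prod_type', ← Equiv.sum_comp swap.toPerm]
  simp [Fintype.sum_prod_type, Finset.piecewise_same, Finset.mul_sum, -Fintype.card_pi]

lemma sum_comp_restrict (S : Finset ι) (F : (∀ i : {j // j ∈ S}, d i) → ℂ) :
    ∑ z : ∀ j, d j, F (fun i => z i)
      = Fintype.card (∀ i : {j // j ∉ S}, d i) * ∑ u, F u := by
  rw [← (Equiv.piEquivPiSubtypeProd (· ∈ S) d).symm.sum_comp, Fintype.sum_prod_type,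
    Finset.sum_comm]
  simp [Equiv.piEquivPiSubtypeProd_symm_apply, Finset.mul_sum, -Fintype.card_pi]

variable [∀ i, DecidableEq (d i)]

lemma norm_ptraceSet_le (S : Finset ι) (A : Matrix (∀ j, d j) (∀ j, d j) ℂ) :
    ‖ptraceSet S A‖ ≤ Fintype.card (∀ i : {j // j ∈ S}, d i) * ‖A‖ := by
  rw [← partialTraceFst_reindex, ← norm_reindex (Equiv.piEquivPiSubtypeProd (· ∈ S) d) A]
  exact norm_partialTraceFst_le _

/-- Only the restriction of `z` to `S` matters in the sum, so dividing by the dimension of the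
whole space averages over the configurations of `S`. -/
def condExp (S : Finset ι) (A : Matrix (∀ j, d j) (∀ j, d j) ℂ) :
    Matrix (∀ j, d j) (∀ j, d j) ℂ :=
  fun x y => if ∀ i ∈ S, x i = y i then
    (Fintype.card (∀ j, d j) : ℂ)⁻¹ * ∑ z, A (S.piecewise z x) (S.piecewise z y) else 0

lemma condExp_apply_of_forall {S : Finset ι} {x y : ∀ j, d j} (h : ∀ i ∈ S, x i = y i)
    (A : Matrix (∀ j, d j) (∀ j, d j) ℂ) :
    condExp S A x y
      = (Fintype.card (∀ j, d j) : ℂ)⁻¹ * ∑ z, A (S.piecewise z x) (S.piecewise z y) :=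
  if_pos h

lemma condExp_apply_of_not_forall {S : Finset ι} {x y : ∀ j, d j} (h : ¬ ∀ i ∈ S, x i = y i)
    (A : Matrix (∀ j, d j) (∀ j, d j) ℂ) : condExp S A x y = 0 :=
  if_neg h

lemma condExp_empty (A : Matrix (∀ j, d j) (∀ j, d j) ℂ) : condExp ∅ A = A := by
  ext x y
  simp [condExp, inv_mul_cancel_left₀ (natCast_card_ne_zero x), -Fintype.card_pi]

lemma condExp_sub (S : Finset ι) (A B : Matrix (∀ j, d j) (∀ j, d j) ℂ) :
    condExp S (A - B) = condExp S A - condExp S B := by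
  ext x y
  simp only [condExp, Matrix.sub_apply, Finset.sum_sub_distrib, mul_sub]
  split_ifs <;> simp

lemma condExp_condExp {S T : Finset ι} (hST : Disjoint S T)
    (A : Matrix (∀ j, d j) (∀ j, d j) ℂ) :
    condExp S (condExp T A) = condExp (S ∪ T) A := by
  ext x y
  have hoff : ∀ z x : ∀ j, d j, ∀ i ∈ T, S.piecewise z x i = x i := fun z x i hi =>
    Finset.piecewise_eq_of_notMem _ _ _ (Finset.disjoint_right.1 hST hi)
  by_cases hxy : ∀ i ∈ S ∪ T, x i = y i
  · rw [Finset.forall_mem_union] at hxy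
    have hT : ∀ z, ∀ i ∈ T, S.piecewise z x i = S.piecewise z y i := fun z i hi => by
      rw [hoff z x i hi, hoff z y i hi, hxy.2 i hi]
    have hpw : ∀ z w x : ∀ j, d j,
        T.piecewise w (S.piecewise z x) = (S ∪ T).piecewise (T.piecewise w z) x := by
      intro z w x
      ext j
      by_cases hjT : j ∈ T <;> by_cases hjS : j ∈ S <;> simp [hjT, hjS]
    simp only [condExp_apply_of_forall hxy.1, condExp_apply_of_forall (hT _),
      condExp_apply_of_forall (Finset.forall_mem_union.2 hxy), hpw, ← Finset.mul_sum]
    rw [sum_sum_piecewise T fun u => A ((S ∪ T).piecewise u x) ((S ∪ T).piecewise u y),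
      inv_mul_cancel_left₀ (natCast_card_ne_zero x)]
  · rw [condExp_apply_of_not_forall hxy]
    by_cases hS : ∀ i ∈ S, x i = y i
    · have hT : ¬ ∀ i ∈ T, x i = y i := fun hT => hxy (Finset.forall_mem_union.2 ⟨hS, hT⟩)
      rw [condExp_apply_of_forall hS]
      refine mul_eq_zero_of_right _ <| Finset.sum_eq_zero fun z _ =>
        condExp_apply_of_not_forall (fun h => hT fun i hi => ?_) _
      rw [← hoff z x i hi, ← hoff z y i hi, h i hi]
    · exact condExp_apply_of_not_forall hS _

lemma condExp_embedAt (i : ι)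
    (M : Matrix (∀ j : {j : ι // j ≠ i}, d j.1) (∀ j : {j : ι // j ≠ i}, d j.1) ℂ) :
    condExp {i} (embedAt i M) = embedAt i M := by
  ext x y
  by_cases hxy : x i = y i
  · have hoff : ∀ (z x : ∀ j, d j) (j : {j : ι // j ≠ i}),
        ({i} : Finset ι).piecewise z x j = x j :=
      fun z x j => Finset.piecewise_eq_of_notMem _ _ _ (Finset.notMem_singleton.2 j.2)
    have hterm : ∀ z : ∀ j, d j, embedAt i M (({i} : Finset ι).piecewise z x)
        (({i} : Finset ι).piecewise z y) = embedAt i M x y := fun z => by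
      simp [embedAt, hoff, hxy]
    rw [condExp_apply_of_forall (by simpa using hxy), Finset.sum_congr rfl fun z _ => hterm z,
      Finset.sum_const, Finset.card_univ, nsmul_eq_mul,
      inv_mul_cancel_left₀ (natCast_card_ne_zero x)]
  · rw [condExp_apply_of_not_forall (by simpa using hxy)]
    simp [embedAt, hxy]

lemma reindex_condExp (S : Finset ι) (A : Matrix (∀ j, d j) (∀ j, d j) ℂ) :
    Matrix.reindex (Equiv.piEquivPiSubtypeProd (· ∈ S) d)
        (Equiv.piEquivPiSubtypeProd (· ∈ S) d) (condExp S A)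
      = (Fintype.card (∀ i : {j // j ∈ S}, d i) : ℂ)⁻¹ • (1 ⊗ₖ ptraceSet S A) := by
  set e := Equiv.piEquivPiSubtypeProd (· ∈ S) d
  ext ⟨w, a⟩ ⟨w', b⟩
  have hcond : (∀ i ∈ S, e.symm (w, a) i = e.symm (w', b) i) ↔ w = w' := by
    refine ⟨fun h => funext fun i => ?_, fun h i hi => by simp [e, hi, h]⟩
    simpa [e, i.2] using h i i.2
  have hpw : ∀ (z : ∀ j, d j) (a : ∀ i : {j // j ∉ S}, d i),
      S.piecewise z (e.symm (w, a)) = e.symm (fun i => z i, a) := by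
    intro z a
    ext j
    by_cases hj : j ∈ S <;> simp [e, hj]
  have hcard : (Fintype.card (∀ j, d j) : ℂ) =
      Fintype.card (∀ i : {j // j ∈ S}, d i) * Fintype.card (∀ i : {j // j ∉ S}, d i) := by
    rw [← Nat.cast_mul, ← Fintype.card_prod, Fintype.card_congr e]
  simp only [Matrix.reindex_apply, Matrix.submatrix_apply, Matrix.smul_apply,
    Matrix.kroneckerMap_apply, Matrix.one_apply]
  by_cases hww : w = w'
  · subst hww
    rw [condExp_apply_of_forall (hcond.2 rfl)]
    simp only [hpw, if_true, one_mul, smul_eq_mul]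
    rw [sum_comp_restrict S fun u => A (e.symm (u, a)) (e.symm (u, b)), hcard, mul_inv,
      mul_assoc, inv_mul_cancel_left₀ (natCast_card_ne_zero a)]
    rfl
  · rw [condExp_apply_of_not_forall (mt hcond.1 hww), if_neg hww, zero_mul, smul_zero]

lemma norm_condExp_le (S : Finset ι) (A : Matrix (∀ j, d j) (∀ j, d j) ℂ) :
    ‖condExp S A‖ ≤ ‖A‖ := by
  set e := Equiv.piEquivPiSubtypeProd (· ∈ S) d
  set c := Fintype.card (∀ i : {j // j ∈ S}, d i)
  calc ‖condExp S A‖ = ‖Matrix.reindex e e (condExp S A)‖ := (norm_reindex e _).symm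
    _ ≤ (c : ℝ)⁻¹ * (c * ‖A‖) := by
      rw [reindex_condExp, norm_smul, norm_inv, Complex.norm_natCast]
      gcongr
      exact (norm_one_kronecker_le _).trans (norm_ptraceSet_le S A)
    _ ≤ ‖A‖ := by
      rw [← mul_assoc]
      exact mul_le_of_le_one_left (norm_nonneg A) inv_mul_le_one

lemma trace_condExp_mul_eq_zero {J : Finset ι} {X : Matrix (∀ j, d j) (∀ j, d j) ℂ}
    (hX : ptraceSet J X = 0) (H : Matrix (∀ j, d j) (∀ j, d j) ℂ) :
    (condExp J H * X).trace = 0 := by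
  set e := Equiv.piEquivPiSubtypeProd (· ∈ J) d
  rw [← trace_reindex e, Matrix.reindex_apply, ← Matrix.submatrix_mul_equiv _ _ _ e.symm,
    ← Matrix.reindex_apply, ← Matrix.reindex_apply, reindex_condExp, Matrix.smul_mul,
    Matrix.trace_smul, trace_one_kronecker_mul, partialTraceFst_reindex J X, hX,
    Matrix.mul_zero, Matrix.trace_zero, smul_zero]

lemma norm_sub_condExp_le_sum (H : Matrix (∀ j, d j) (∀ j, d j) ℂ) (S : Finset ι) :
    ‖H - condExp S H‖ ≤ ∑ i ∈ S, ‖H - condExp {i} H‖ := by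
  induction S using Finset.induction_on with
  | empty => simp [condExp_empty]
  | @insert i S hi ih =>
    rw [Finset.sum_insert hi, Finset.insert_eq, Finset.union_comm,
      ← condExp_condExp (Finset.disjoint_singleton_right.2 hi)]
    calc ‖H - condExp S (condExp {i} H)‖
        = ‖condExp S (H - condExp {i} H) + (H - condExp S H)‖ := by
          rw [condExp_sub, sub_add_sub_cancel']
      _ ≤ ‖H - condExp {i} H‖ + ∑ j ∈ S, ‖H - condExp {j} H‖ :=
          (norm_add_le _ _).trans (add_le_add (norm_condExp_le _ _) ih)

lemma norm_sub_condExp_singleton_le (H : Matrix (∀ j, d j) (∀ j, d j) ℂ) (i : ι)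
    (M : Matrix (∀ j : {j : ι // j ≠ i}, d j.1) (∀ j : {j : ι // j ≠ i}, d j.1) ℂ) :
    ‖H - condExp {i} H‖ ≤ 2 * ‖H - embedAt i M‖ := by
  have h : H - condExp {i} H = (H - embedAt i M) - condExp {i} (H - embedAt i M) := by
    rw [condExp_sub, condExp_embedAt, sub_sub_sub_cancel_right]
  rw [h, two_mul]
  exact (norm_sub_le _ _).trans (add_le_add le_rfl (norm_condExp_le _ _))

lemma norm_sub_condExp_singleton_le_lipNorm (H : Matrix (∀ j, d j) (∀ j, d j) ℂ) (i : ι) :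
    ‖H - condExp {i} H‖ ≤ lipNorm H := by
  rw [lipNorm]
  calc ‖H - condExp {i} H‖ ≤ 2 * ⨅ M, opNorm (H - embedAt i M) := by
        rw [← div_le_iff₀' two_pos]
        refine le_ciInf fun M => ?_
        rw [div_le_iff₀' two_pos, opNorm_eq_norm]
        exact norm_sub_condExp_singleton_le H i M
    _ ≤ _ := by
        gcongr
        exact le_ciSup (f := fun i => ⨅ M, opNorm (H - embedAt i M))
          (Set.finite_range _).bddAbove i

lemma re_trace_mul_le_card_mul_lipNorm_mul_traceNorm {J : Finset ι}
    {X : Matrix (∀ j, d j) (∀ j, d j) ℂ} (hX : X.IsHermitian) (hJ : ptraceSet J X = 0)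
    (H : Matrix (∀ j, d j) (∀ j, d j) ℂ) :
    (H * X).trace.re ≤ J.card * lipNorm H * traceNorm X := by
  have hH : (H * X).trace = ((H - condExp J H) * X).trace := by
    rw [Matrix.sub_mul, Matrix.trace_sub, trace_condExp_mul_eq_zero hJ, sub_zero]
  calc (H * X).trace.re ≤ ‖H - condExp J H‖ * traceNorm X :=
        hH ▸ (le_abs_self _).trans (abs_re_trace_mul_le _ X hX)
    _ ≤ J.card * lipNorm H * traceNorm X := by
        gcongr
        · exact traceNorm_nonneg X
        · refine (norm_sub_condExp_le_sum H J).trans ?_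
          simpa using Finset.sum_le_sum fun i _ => norm_sub_condExp_singleton_le_lipNorm H i

end Multipartite

theorem stmt8_general {ι : Type*} [Fintype ι] [DecidableEq ι] {d : ι → Type*}
    [∀ i, Fintype (d i)] [∀ i, DecidableEq (d i)]
    (X : Matrix (∀ j, d j) (∀ j, d j) ℂ) (hX : X.IsHermitian)
    (J : Finset ι) (hJ : ptraceSet J X = 0) :
    w1Norm X ≤ (J.card : ℝ) * traceNorm X := by
  refine Real.sSup_le ?_ (mul_nonneg J.card.cast_nonneg (traceNorm_nonneg X))
  rintro _ ⟨H, -, hH, rfl⟩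
  calc (H * X).trace.re ≤ J.card * lipNorm H * traceNorm X :=
        re_trace_mul_le_card_mul_lipNorm_mul_traceNorm hX hJ H
    _ ≤ J.card * traceNorm X := by
        gcongr
        · exact traceNorm_nonneg X
        · exact mul_le_of_le_one_right J.card.cast_nonneg hH

/-- If `X` is a traceless self-adjoint operator on a multipartite Hilbert space such that the
partial trace of `X` over a subset `J` of the sites vanishes, then
`‖X‖_{W₁} ≤ |J|·‖X‖₁`. -/
theorem stmt8 {ι : Type*} [Fintype ι] [DecidableEq ι] [Nonempty ι] {d : ι → Type*}
    [∀ i, Fintype (d i)] [∀ i, DecidableEq (d i)]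
    (X : Matrix (∀ j, d j) (∀ j, d j) ℂ) (hX : X.IsHermitian) (htr : X.trace = 0)
    (J : Finset ι) (hJ : ptraceSet J X = 0) :
    w1Norm X ≤ (J.card : ℝ) * traceNorm X :=
  stmt8_general X hX J hJ

end Paper
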